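/- Let $h$ be a smooth Hermitian metric on a holomorphic vector bundle $E$. Then for every open set $U$ and holomorphic section $u\in H^0(U,E)$, the function $|u|_h^2$ is plurisubharmonic if and only if $\log|u|_h^2$ is plurisubharmonic for all such $u$. -/

import Mathlib

open MeasureTheory Complex Metric Matrix Filter Topology
open scoped ComplexOrder ENNReal NNReal

noncomputable section

abbrev Cn (n : ℕ) := Fin n → ℂ

def basisV {n : ℕ} (j : Fin n) : Cn n := fun k => if k = j then 1 else 0

/-- Wirtinger derivative `∂/∂z_j` (junk value where `f` is not differentiable). -/
def wder {n : ℕ} (j : Fin n) (f : Cn n → ℂ) (z : Cn n) : ℂ :=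
  (1 / 2 : ℂ) * (fderiv ℝ f z (basisV j) - Complex.I * fderiv ℝ f z (Complex.I • basisV j))

/-- Wirtinger derivative `∂/∂z̄_j`. -/
def wbar {n : ℕ} (j : Fin n) (f : Cn n → ℂ) (z : Cn n) : ℂ :=
  (1 / 2 : ℂ) * (fderiv ℝ f z (basisV j) + Complex.I * fderiv ℝ f z (Complex.I • basisV j))

/-- Plurisubharmonicity (extended-real valued) on `U`: upper semicontinuity together with the
sub-mean value property on complex lines, expressed via comparison with boundary values of
harmonic functions (real parts of holomorphic functions) on discs. -/
def PshOn {n : ℕ} (f : Cn n → EReal) (U : Set (Cn n)) : Prop :=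
  UpperSemicontinuousOn f U ∧
  ∀ z ∈ U, ∀ v : Cn n, ∀ r : ℝ, 0 < r →
    (∀ w : ℂ, ‖w‖ ≤ r → z + w • v ∈ U) →
    ∀ F : ℂ → ℂ, ContinuousOn F (closedBall 0 r) → DifferentiableOn ℂ F (ball 0 r) →
      (∀ w : ℂ, ‖w‖ = r → f (z + w • v) ≤ ((F w).re : EReal)) →
      f z ≤ ((F 0).re : EReal)

def PshOnR {n : ℕ} (f : Cn n → ℝ) (U : Set (Cn n)) : Prop :=
  PshOn (fun z => (f z : EReal)) U

/-- `|v|²_h` for a Hermitian matrix `h`. -/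
def sqNorm {r : ℕ} (h : Matrix (Fin r) (Fin r) ℂ) (v : Fin r → ℂ) : ℝ :=
  (star v ⬝ᵥ h.mulVec v).re

/-- Chern connection form `θ_j = h⁻¹ ∂_j h`. -/
def connForm {n r : ℕ} (h : Cn n → Matrix (Fin r) (Fin r) ℂ) (j : Fin n) (z : Cn n) :
    Matrix (Fin r) (Fin r) ℂ :=
  (h z)⁻¹ * (Matrix.of fun a b => wder j (fun w => h w a b) z)

/-- Chern curvature coefficients `Θ_{j k̄} = ∂̄_k (h⁻¹ ∂_j h)`. -/
def curvMat {n r : ℕ} (h : Cn n → Matrix (Fin r) (Fin r) ℂ) (j k : Fin n) (z : Cn n) :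
    Matrix (Fin r) (Fin r) ℂ :=
  Matrix.of fun a b => wbar k (fun w => connForm h j w a b) z

/-- The Hermitian form `Θ_{E,h}(ξ ⊗ v, ξ ⊗ v) = (√-1 Θ(ξ, ξ̄) v, v)_h`. -/
def griffithsForm {n r : ℕ} (h : Cn n → Matrix (Fin r) (Fin r) ℂ) (z : Cn n)
    (ξ : Fin n → ℂ) (v : Fin r → ℂ) : ℝ :=
  - (∑ j, ∑ k, ξ j * (starRingEnd ℂ) (ξ k) *
      (star v ⬝ᵥ ((h z) * curvMat h j k z).mulVec v)).re

def SmoothMetricOn {n r : ℕ} (U : Set (Cn n)) (h : Cn n → Matrix (Fin r) (Fin r) ℂ) : Prop :=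
  (∀ a b, ContDiffOn ℝ (⊤ : ℕ∞) (fun z => h z a b) U) ∧ ∀ z ∈ U, (h z).PosDef

def HolSection {n r : ℕ} (V : Set (Cn n)) (u : Cn n → Fin r → ℂ) : Prop :=
  ∀ a, DifferentiableOn ℂ (fun z => u z a) V

/-- Griffiths semi-negativity: `|u|²_h` is psh for every local holomorphic section. -/
def GriffithsSemiNegOn {n r : ℕ} (U : Set (Cn n)) (h : Cn n → Matrix (Fin r) (Fin r) ℂ) : Prop :=
  ∀ V, IsOpen V → V ⊆ U → ∀ u, HolSection V u →
    PshOnR (fun z => sqNorm (h z) (u z)) V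

/-- The dual metric `h⋆` on the dual bundle. -/
def dualMetric {n r : ℕ} (h : Cn n → Matrix (Fin r) (Fin r) ℂ) (z : Cn n) :
    Matrix (Fin r) (Fin r) ℂ := ((h z)⁻¹)ᵀ

def GriffithsSemiPosOn {n r : ℕ} (U : Set (Cn n)) (h : Cn n → Matrix (Fin r) (Fin r) ℂ) : Prop :=
  GriffithsSemiNegOn U (dualMetric h)

def IsSingularMetricOn {n r : ℕ} (U : Set (Cn n)) (h : Cn n → Matrix (Fin r) (Fin r) ℂ) : Prop :=
  (∀ a b, Measurable fun z => h z a b) ∧ (∀ z ∈ U, (h z).PosSemidef) ∧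
    (∀ᵐ z, z ∈ U → (h z).det ≠ 0)

def Polydisk {n : ℕ} (R : Fin n → ℝ) : Set (Cn n) := {z | ∀ j, ‖z j‖ < R j}

/-- `F = ∂_m f` in the sense of distributions on `U`. -/
def IsWeakWirtDeriv {n : ℕ} (U : Set (Cn n)) (m : Fin n) (f F : Cn n → ℂ) : Prop :=
  ∀ φ : Cn n → ℂ, ContDiff ℝ (⊤ : ℕ∞) φ → HasCompactSupport φ → tsupport φ ⊆ U →
    ∫ z in U, f z * wder m φ z = - ∫ z in U, F z * φ z

def LocL2On {n : ℕ} (U : Set (Cn n)) (f : Cn n → ℂ) : Prop :=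
  ∀ K, IsCompact K → K ⊆ U → (∫⁻ z in K, (‖f z‖₊ : ℝ≥0∞) ^ 2) < ⊤

def LocL1On {n : ℕ} (U : Set (Cn n)) (f : Cn n → ℂ) : Prop :=
  ∀ K, IsCompact K → K ⊆ U → (∫⁻ z in K, (‖f z‖₊ : ℝ≥0∞)) < ⊤
/-- extended-real logarithm, `elog x = -∞` where `x ≤ 0`. -/
def elog (x : ℝ) : EReal := if x ≤ 0 then ⊥ else ((Real.log x : ℝ) : EReal)


/-! ### Auxiliary lemmas -/

lemma elog_le_coe_iff (x c : ℝ) : elog x ≤ (c : EReal) ↔ x ≤ Real.exp c := by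
  unfold elog
  split_ifs with hx
  · simp only [bot_le, true_iff]
    exact hx.trans (Real.exp_pos c).le
  · push_neg at hx
    rw [EReal.coe_le_coe_iff, Real.log_le_iff_le_exp hx]

lemma elog_lt_coe_iff (x c : ℝ) : elog x < (c : EReal) ↔ x < Real.exp c := by
  unfold elog
  split_ifs with hx
  · constructor
    · intro _; exact hx.trans_lt (Real.exp_pos c)
    · intro _; exact bot_lt_iff_ne_bot.2 (EReal.coe_ne_bot c)
  · push_neg at hx
    rw [EReal.coe_lt_coe_iff, Real.log_lt_iff_lt_exp hx]

lemma elog_lt_top' (x : ℝ) : elog x < ⊤ := by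
  unfold elog; split_ifs <;> simp

/-- Minimum principle for the real part of a holomorphic function on a disc. -/
lemma minPrinciple (F : ℂ → ℂ) (r c : ℝ) (hr : 0 < r)
    (hFc : ContinuousOn F (closedBall 0 r)) (hFd : DifferentiableOn ℂ F (ball 0 r))
    (hb : ∀ w : ℂ, ‖w‖ = r → c ≤ (F w).re) : c ≤ (F 0).re := by
  have hclos : closure (ball (0:ℂ) r) = closedBall 0 r := closure_ball 0 hr.ne'
  have hfr : frontier (ball (0:ℂ) r) = sphere 0 r := frontier_ball 0 hr.ne'
  have hdc : DiffContOnCl ℂ (fun w => Complex.exp ((c:ℂ) - F w)) (ball 0 r) := by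
    constructor
    · exact ((differentiableOn_const _).sub hFd).cexp
    · rw [hclos]; exact ((continuousOn_const.sub hFc)).cexp
  have key : ‖Complex.exp ((c:ℂ) - F 0)‖ ≤ 1 := by
    refine Complex.norm_le_of_forall_mem_frontier_norm_le (isBounded_ball) hdc ?_ ?_
    · intro w hw
      rw [hfr, mem_sphere_zero_iff_norm] at hw
      rw [Complex.norm_exp, Real.exp_le_one_iff]
      simp only [Complex.sub_re, Complex.ofReal_re]
      linarith [hb w hw]
    · rw [hclos]; exact mem_closedBall_self (by positivity)
  rw [Complex.norm_exp, Real.exp_le_one_iff] at key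
  simp only [Complex.sub_re, Complex.ofReal_re] at key
  linarith

lemma sqNorm_smul {r : ℕ} (h : Matrix (Fin r) (Fin r) ℂ) (c : ℂ) (v : Fin r → ℂ) :
    sqNorm h (fun a => c * v a) = Complex.normSq c * sqNorm h v := by
  unfold sqNorm
  have hv : (fun a => c * v a) = c • v := rfl
  rw [hv, star_smul, smul_dotProduct, Matrix.mulVec_smul, dotProduct_smul]
  rw [smul_eq_mul, smul_eq_mul, ← mul_assoc]
  have hcc : (starRingEnd ℂ) c * c = ((Complex.normSq c : ℝ) : ℂ) := by
    rw [mul_comm, Complex.mul_conj]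
  rw [RCLike.star_def, hcc, Complex.re_ofReal_mul]

lemma normSq_exp_half (s : ℂ) :
    Complex.normSq (Complex.exp (((-(1/2) : ℝ) : ℂ) * s)) = Real.exp (-s.re) := by
  rw [Complex.normSq_eq_norm_sq, Complex.norm_exp, sq, ← Real.exp_add, Complex.re_ofReal_mul]
  ring_nf

lemma contOn_sqNorm {n r : ℕ} {U V : Set (Cn n)} (hVU : V ⊆ U)
    {h : Cn n → Matrix (Fin r) (Fin r) ℂ} (hsm : SmoothMetricOn U h)
    {u : Cn n → Fin r → ℂ} (hu : HolSection V u) :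
    ContinuousOn (fun z => sqNorm (h z) (u z)) V := by
  have key : ContinuousOn (fun z => star (u z) ⬝ᵥ (h z).mulVec (u z)) V := by
    simp only [dotProduct, Matrix.mulVec, Pi.star_apply, RCLike.star_def]
    apply continuousOn_finset_sum
    intro a _
    apply ContinuousOn.mul
    · exact Complex.continuous_conj.comp_continuousOn ((hu a).continuousOn)
    · apply continuousOn_finset_sum
      intro b _
      exact (((hsm.1 a b).continuousOn).mono hVU).mul ((hu b).continuousOn)
  exact Complex.continuous_re.comp_continuousOn key

lemma usc_elog_comp {n : ℕ} {V : Set (Cn n)} {f : Cn n → ℝ} (hf : ContinuousOn f V) :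
    UpperSemicontinuousOn (fun z => elog (f z)) V := by
  intro z hz y hy
  induction y using EReal.rec with
  | bot => exact absurd hy (by simp)
  | top => exact Filter.Eventually.of_forall fun ζ => elog_lt_top' _
  | coe c =>
    rw [elog_lt_coe_iff] at hy
    exact ((hf z hz).eventually_lt_const hy).mono fun ζ hζ => (elog_lt_coe_iff _ _).2 hζ

/-- for a smooth Hermitian metric `h`, `|u|²_h` is psh for all local holomorphic
sections `u` iff `log |u|²_h` is psh for all such `u`. -/
theorem statement1 {n r : ℕ} (U : Set (Cn n)) (hU : IsOpen U)
    (h : Cn n → Matrix (Fin r) (Fin r) ℂ) (hsm : SmoothMetricOn U h) :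
    (∀ V, IsOpen V → V ⊆ U → ∀ u, HolSection V u →
        PshOnR (fun z => sqNorm (h z) (u z)) V)
      ↔ (∀ V, IsOpen V → V ⊆ U → ∀ u, HolSection V u →
        PshOn (fun z => elog (sqNorm (h z) (u z))) V) := by
  have hsqnonneg : ∀ z ∈ U, ∀ v : Fin r → ℂ, 0 ≤ sqNorm (h z) v := by
    intro z hz v
    simpa [sqNorm] using (hsm.2 z hz).posSemidef.re_dotProduct_nonneg v
  constructor
  · -- `|u|²` psh ⟹ `log |u|²` psh
    intro Hsq V hV hVU u hu
    refine ⟨usc_elog_comp (contOn_sqNorm hVU hsm hu), ?_⟩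
    intro z hz v r0 hr0 hmem F hFc hFd hb
    set f : Cn n → ℝ := fun ζ => sqNorm (h ζ) (u ζ) with hfdef
    show elog (f z) ≤ (((F 0).re : ℝ) : EReal)
    replace hb : ∀ w : ℂ, ‖w‖ = r0 → elog (f (z + w • v)) ≤ (((F w).re : ℝ) : EReal) := hb
    by_cases hv : v = 0
    · -- degenerate direction
      subst hv
      by_cases hfz : f z ≤ 0
      · have hbot : elog (f z) = ⊥ := if_pos hfz
        rw [hbot]; exact bot_le
      · push_neg at hfz
        have helog : elog (f z) = ((Real.log (f z) : ℝ) : EReal) := if_neg (not_le.2 hfz)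
        rw [helog, EReal.coe_le_coe_iff]
        refine minPrinciple F r0 _ hr0 hFc hFd fun w hw => ?_
        have hbw := hb w hw
        simp only [smul_zero, add_zero] at hbw
        rw [helog] at hbw
        exact EReal.coe_le_coe_iff.1 hbw
    · obtain ⟨j, hvj⟩ : ∃ j, v j ≠ 0 := by
        by_contra hcon; push_neg at hcon; exact hv (funext hcon)
      suffices hsuff : ∀ ε : ℝ, 0 < ε → f z ≤ Real.exp ((F 0).re + ε) by
        rw [elog_le_coe_iff]
        by_cases hfz : f z ≤ 0
        · exact hfz.trans (Real.exp_pos _).le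
        · push_neg at hfz
          rw [← Real.log_le_iff_le_exp hfz]
          refine le_of_forall_sub_le fun ε hε => ?_
          have := (Real.log_le_iff_le_exp hfz).2 (hsuff ε hε)
          linarith
      intro ε hε
      -- uniform continuity of F on the closed disc
      have hunif := (isCompact_closedBall (0:ℂ) r0).uniformContinuousOn_of_continuous hFc
      rw [Metric.uniformContinuousOn_iff] at hunif
      obtain ⟨δ, hδ, hδ'⟩ := hunif ε hε
      set ρ : ℝ := max (1/2) (1 - δ / (2 * r0)) with hρdef
      have hρ0 : 0 < ρ := lt_of_lt_of_le (by norm_num) (le_max_left _ _)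
      have hρ1 : ρ < 1 := by
        apply max_lt (by norm_num)
        have : 0 < δ / (2 * r0) := by positivity
        linarith
      have hρle : 1 - δ / (2 * r0) ≤ ρ := le_max_right _ _
      have hρr : r0 < r0 / ρ := by
        rw [lt_div_iff₀ hρ0]; nlinarith
      set μ : Cn n → ℂ := fun ζ => (ζ j - z j) / v j with hμdef
      have hμz : μ z = 0 := by simp [hμdef]
      have hμline : ∀ w : ℂ, μ (z + w • v) = w := by
        intro w
        simp only [hμdef, Pi.add_apply, Pi.smul_apply, smul_eq_mul]
        field_simp
        ring
      have hμcont : Continuous μ := ((continuous_apply j).sub continuous_const).div_const _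
      set V' : Set (Cn n) := V ∩ μ ⁻¹' (ball 0 (r0 / ρ)) with hV'def
      have hV'open : IsOpen V' := hV.inter (isOpen_ball.preimage hμcont)
      have hzV' : z ∈ V' := by
        refine ⟨hz, ?_⟩
        simp only [Set.mem_preimage, hμz, mem_ball_zero_iff, norm_zero]
        positivity
      have hmaps : ∀ ζ ∈ V', (ρ:ℂ) * μ ζ ∈ ball (0:ℂ) r0 := by
        intro ζ hζ
        have h1 : ‖μ ζ‖ < r0 / ρ := by
          have := hζ.2
          simpa [mem_ball_zero_iff] using this
        rw [mem_ball_zero_iff]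
        calc ‖(ρ:ℂ) * μ ζ‖ = ρ * ‖μ ζ‖ := by
              rw [norm_mul, Complex.norm_real, Real.norm_eq_abs, abs_of_pos hρ0]
        _ < ρ * (r0 / ρ) := by exact mul_lt_mul_of_pos_left h1 hρ0
        _ = r0 := by field_simp
      set G : Cn n → ℂ :=
        fun ζ => Complex.exp (((-(1/2) : ℝ) : ℂ) * (F ((ρ:ℂ) * μ ζ) + ((ε:ℝ):ℂ))) with hGdef
      set u' : Cn n → Fin r → ℂ := fun ζ a => G ζ * u ζ a with hu'def
      have hGdiff : DifferentiableOn ℂ G V' := by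
        apply DifferentiableOn.cexp
        apply DifferentiableOn.const_mul
        apply DifferentiableOn.add_const
        have hμdiff : Differentiable ℂ μ := by
          show Differentiable ℂ fun ζ : Cn n => (ζ j - z j) / v j
          have h1 : Differentiable ℂ (fun ζ : Cn n => ζ j) :=
            (ContinuousLinearMap.proj j : Cn n →L[ℂ] ℂ).differentiable
          have h2 : Differentiable ℂ (fun ζ : Cn n => ζ j - z j) := h1.sub_const (z j)
          simpa only [div_eq_mul_inv] using h2.mul_const (v j)⁻¹
        exact hFd.comp (((differentiable_const _).mul hμdiff).differentiableOn) hmaps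
      have hu' : HolSection V' u' := fun a =>
        hGdiff.mul ((hu a).mono Set.inter_subset_left)
      have hnormG : ∀ ζ, Complex.normSq (G ζ) = Real.exp (-((F ((ρ:ℂ) * μ ζ)).re + ε)) := by
        intro ζ
        rw [hGdef]
        rw [normSq_exp_half]
        simp [Complex.add_re, Complex.ofReal_re]
      have hsq' : ∀ ζ, sqNorm (h ζ) (u' ζ) = Complex.normSq (G ζ) * f ζ := by
        intro ζ
        exact sqNorm_smul (h ζ) (G ζ) (u ζ)
      have Hpsh := Hsq V' hV'open (fun ζ hζ => hVU hζ.1) u' hu'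
      have hmemb : ∀ w : ℂ, ‖w‖ ≤ r0 → z + w • v ∈ V' := by
        intro w hw
        refine ⟨hmem w hw, ?_⟩
        simp only [Set.mem_preimage, hμline w, mem_ball_zero_iff]
        exact lt_of_le_of_lt hw hρr
      have hbdry : ∀ w : ℂ, ‖w‖ = r0 →
          ((sqNorm (h (z + w • v)) (u' (z + w • v)) : ℝ) : EReal) ≤ (((1:ℂ)).re : EReal) := by
        intro w hw
        have hfw : f (z + w • v) ≤ Real.exp ((F w).re) := by
          have := hb w hw
          rw [elog_le_coe_iff] at this
          exact this
        have hdist : (F w).re ≤ (F ((ρ:ℂ) * w)).re + ε := by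
          have hwc : w ∈ closedBall (0:ℂ) r0 := by
            rw [mem_closedBall_zero_iff, hw]
          have hρwc : (ρ:ℂ) * w ∈ closedBall (0:ℂ) r0 := by
            rw [mem_closedBall_zero_iff, norm_mul, Complex.norm_real, Real.norm_eq_abs,
              abs_of_pos hρ0, hw]
            nlinarith
          have hd : dist w ((ρ:ℂ) * w) < δ := by
            rw [Complex.dist_eq]
            have : w - (ρ:ℂ) * w = ((1 - ρ : ℝ):ℂ) * w := by push_cast; ring
            rw [this]
            rw [norm_mul]
            rw [Complex.norm_real, Real.norm_eq_abs, _root_.abs_of_nonneg (by linarith : (0:ℝ) ≤ 1 - ρ), hw]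
            have h2 : (1 - ρ) * r0 ≤ δ / 2 := by
              have : 1 - ρ ≤ δ / (2 * r0) := by linarith
              calc (1 - ρ) * r0 ≤ δ / (2 * r0) * r0 := by nlinarith
              _ = δ / 2 := by field_simp
            linarith
          have := hδ' w hwc ((ρ:ℂ) * w) hρwc hd
          rw [Complex.dist_eq] at this
          have habs : (F w).re - (F ((ρ:ℂ) * w)).re ≤ ‖F w - F ((ρ:ℂ) * w)‖ := by
            calc (F w).re - (F ((ρ:ℂ) * w)).re = (F w - F ((ρ:ℂ) * w)).re := by
                  simp [Complex.sub_re]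
            _ ≤ |(F w - F ((ρ:ℂ) * w)).re| := le_abs_self _
            _ ≤ ‖F w - F ((ρ:ℂ) * w)‖ := Complex.abs_re_le_norm _
          linarith
        rw [EReal.coe_le_coe_iff, Complex.one_re]
        rw [hsq', hnormG, hμline w]
        calc Real.exp (-((F ((ρ:ℂ) * w)).re + ε)) * f (z + w • v)
            ≤ Real.exp (-((F ((ρ:ℂ) * w)).re + ε)) * Real.exp ((F w).re) := by
              exact mul_le_mul_of_nonneg_left hfw (Real.exp_pos _).le
        _ = Real.exp ((F w).re - ((F ((ρ:ℂ) * w)).re + ε)) := by rw [← Real.exp_add]; ring_nf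
        _ ≤ Real.exp 0 := Real.exp_le_exp.2 (by linarith)
        _ = 1 := Real.exp_zero
      have happ := Hpsh.2 z hzV' v r0 hr0 hmemb (fun _ => (1:ℂ))
        continuousOn_const (differentiableOn_const _) hbdry
      rw [EReal.coe_le_coe_iff, Complex.one_re] at happ
      replace happ : sqNorm (h z) (u' z) ≤ 1 := happ
      rw [hsq', hnormG, hμz, mul_zero] at happ
      -- happ : exp (-((F 0).re + ε)) * f z ≤ 1
      rw [Real.exp_neg] at happ
      have hp := Real.exp_pos ((F 0).re + ε)
      calc f z = Real.exp ((F 0).re + ε) * ((Real.exp ((F 0).re + ε))⁻¹ * f z) := by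
            field_simp
      _ ≤ Real.exp ((F 0).re + ε) * 1 := mul_le_mul_of_nonneg_left happ hp.le
      _ = Real.exp ((F 0).re + ε) := mul_one _
  · -- `log |u|²` psh ⟹ `|u|²` psh
    intro Hlog V hV hVU u hu
    have hcont := contOn_sqNorm hVU hsm hu
    refine ⟨(continuous_coe_real_ereal.comp_continuousOn hcont).upperSemicontinuousOn, ?_⟩
    intro z hz v r0 hr0 hmem F hFc hFd hb
    set f : Cn n → ℝ := fun ζ => sqNorm (h ζ) (u ζ) with hfdef
    show ((f z : ℝ) : EReal) ≤ (((F 0).re : ℝ) : EReal)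
    replace hb : ∀ w : ℂ, ‖w‖ = r0 → ((f (z + w • v) : ℝ) : EReal) ≤ (((F w).re : ℝ) : EReal) := hb
    have hb' : ∀ w : ℂ, ‖w‖ = r0 → f (z + w • v) ≤ (F w).re := fun w hw =>
      EReal.coe_le_coe_iff.1 (hb w hw)
    have hF0 : 0 ≤ (F 0).re := by
      refine minPrinciple F r0 0 hr0 hFc hFd fun w hw => ?_
      exact le_trans (hsqnonneg _ (hVU (hmem w (le_of_eq hw))) _) (hb' w hw)
    have Hl := Hlog V hV hVU u hu
    have key : ∀ a : ℝ, 0 < a → f z ≤ Real.exp (a⁻¹ * (F 0).re + (Real.log a - 1)) := by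
      intro a ha
      set F' : ℂ → ℂ := fun w => ((a⁻¹ : ℝ) : ℂ) * F w + ((Real.log a - 1 : ℝ) : ℂ) with hF'def
      have hF're : ∀ w, (F' w).re = a⁻¹ * (F w).re + (Real.log a - 1) := by
        intro w
        simp [hF'def, Complex.add_re, Complex.re_ofReal_mul, Complex.ofReal_re]
      have hbdry : ∀ w : ℂ, ‖w‖ = r0 →
          elog (f (z + w • v)) ≤ (((F' w).re : ℝ) : EReal) := by
        intro w hw
        rw [hF're w, elog_le_coe_iff]
        refine (hb' w hw).trans ?_
        have h1 : a⁻¹ * (F w).re - 1 + 1 ≤ Real.exp (a⁻¹ * (F w).re - 1) :=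
          Real.add_one_le_exp _
        calc (F w).re = a * (a⁻¹ * (F w).re) := by field_simp
        _ ≤ a * Real.exp (a⁻¹ * (F w).re - 1) := by nlinarith
        _ = Real.exp (a⁻¹ * (F w).re + (Real.log a - 1)) := by
              rw [← Real.exp_log ha, ← Real.exp_add, Real.exp_log ha]
              ring_nf
      have happ := Hl.2 z hz v r0 hr0 hmem F'
        ((continuousOn_const.mul hFc).add continuousOn_const)
        (((differentiableOn_const _).mul hFd).add (differentiableOn_const _)) hbdry
      rw [hF're 0, ← elog_le_coe_iff] at *
      exact happ
    rw [EReal.coe_le_coe_iff]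
    rcases eq_or_lt_of_le hF0 with hF0' | hF0'
    · -- boundary case (F 0).re = 0
      have hsmall : ∀ ε : ℝ, 0 < ε → f z ≤ ε := by
        intro ε hεp
        have hk := key (ε * Real.exp 1) (by positivity)
        rw [← hF0'] at hk
        have hlog : Real.log (ε * Real.exp 1) = Real.log ε + 1 := by
          rw [Real.log_mul hεp.ne' (Real.exp_pos 1).ne', Real.log_exp]
        rw [hlog] at hk
        calc f z ≤ Real.exp ((ε * Real.exp 1)⁻¹ * 0 + (Real.log ε + 1 - 1)) := hk
        _ = ε := by rw [mul_comm]; simp [Real.exp_log hεp]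
      have hle0 : f z ≤ 0 := by
        by_contra hc
        push_neg at hc
        have := hsmall (f z / 2) (by linarith)
        linarith
      linarith
    · have hk := key ((F 0).re) hF0'
      calc f z ≤ Real.exp (((F 0).re)⁻¹ * (F 0).re + (Real.log ((F 0).re) - 1)) := hk
      _ = (F 0).re := by
          rw [inv_mul_cancel₀ hF0'.ne']
          rw [show (1 : ℝ) + (Real.log ((F 0).re) - 1) = Real.log ((F 0).re) by ring]
          exact Real.exp_log hF0'
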